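/- arXiv:2108.09543 — 7 statements merged into one kernel-verified Lean document; each statement's English description precedes it below -/
import Mathlib

section
/- Let 𝓕 be an ω-closed family of nonempty inductive subsets of ℕ, let n₀ = min(⋃𝓕), and let 𝓕₀ = {−n₀+F : F ∈ 𝓕}. Then the map 𝔥 : B_ω^𝓕 → B_ω^{𝓕₀} defined by 𝔥(i,j,F) = (i,j,−n₀+F) is a semigroup isomorphism; in particular the semigroups B_ω^𝓕 and B_ω^{𝓕₀} are isomorphic. -/
/-- The shift `s + F = {s + k : k ∈ F}` of a set of naturals by an integer,
taken as a subset of `ℕ`. -/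
def natShift (s : ℤ) (F : Set ℕ) : Set ℕ := {m : ℕ | ∃ k ∈ F, (m : ℤ) = s + (k : ℤ)}

/-- `[k) = {i : ℕ | k ≤ i}`. -/
def upSet (k : ℕ) : Set ℕ := {i : ℕ | k ≤ i}

/-- A subset `F ⊆ ℕ` is inductive if `i ∈ F` implies `i + 1 ∈ F`. -/
def IsInductiveSet (F : Set ℕ) : Prop := ∀ i ∈ F, i + 1 ∈ F

/-- A nonempty family `𝓕` of subsets of `ℕ` is `ω`-closed if
`F₁ ∩ (−n + F₂) ∈ 𝓕` for all `n ∈ ℕ` and `F₁, F₂ ∈ 𝓕`. -/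
def IsOmegaClosed (𝓕 : Set (Set ℕ)) : Prop :=
  𝓕.Nonempty ∧ ∀ (n : ℕ), ∀ F₁ ∈ 𝓕, ∀ F₂ ∈ 𝓕, F₁ ∩ natShift (-(n : ℤ)) F₂ ∈ 𝓕

/-- A bundled `ω`-closed family of subsets of `ℕ`. -/
structure OmegaFamily : Type where
  sets : Set (Set ℕ)
  closed : IsOmegaClosed sets

/-- The family consists of nonempty inductive subsets of `ℕ`. -/
def InductiveNonempty (𝓕 : OmegaFamily) : Prop :=
  ∀ F ∈ 𝓕.sets, F.Nonempty ∧ IsInductiveSet F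

/-- The multiplication of `B_ω^𝓕` on raw triples `(i, j, F)`. -/
def bfMulRaw (x y : ℕ × ℕ × Set ℕ) : ℕ × ℕ × Set ℕ :=
  if x.2.1 < y.1 then
    (x.1 + (y.1 - x.2.1), y.2.1, natShift ((x.2.1 : ℤ) - (y.1 : ℤ)) x.2.2 ∩ y.2.2)
  else if x.2.1 = y.1 then (x.1, y.2.1, x.2.2 ∩ y.2.2)
  else (x.1, (x.2.1 - y.1) + y.2.1, x.2.2 ∩ natShift ((y.1 : ℤ) - (x.2.1 : ℤ)) y.2.2)

lemma natShift_zero (F : Set ℕ) : natShift 0 F = F := by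
  ext m; simp [natShift]

/-- The underlying set of the semigroup `B_ω^𝓕`. -/
def BF (𝓕 : OmegaFamily) : Type := {p : ℕ × ℕ × Set ℕ // p.2.2 ∈ 𝓕.sets}

lemma bfMulRaw_mem (𝓕 : OmegaFamily) {x y : ℕ × ℕ × Set ℕ}
    (hx : x.2.2 ∈ 𝓕.sets) (hy : y.2.2 ∈ 𝓕.sets) : (bfMulRaw x y).2.2 ∈ 𝓕.sets := by
  obtain ⟨i₁, j₁, F₁⟩ := x
  obtain ⟨i₂, j₂, F₂⟩ := y
  simp only [bfMulRaw]
  split_ifs with h h'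
  · have e : ((j₁ : ℤ) - (i₂ : ℤ)) = -(((i₂ - j₁ : ℕ)) : ℤ) := by omega
    simp only []
    rw [e, Set.inter_comm]
    exact 𝓕.closed.2 _ _ hy _ hx
  · have e : (F₁ ∩ F₂ : Set ℕ) = F₁ ∩ natShift (-((0 : ℕ) : ℤ)) F₂ := by
      simp [natShift_zero]
    simp only []
    rw [e]
    exact 𝓕.closed.2 0 _ hx _ hy
  · have e : ((i₂ : ℤ) - (j₁ : ℤ)) = -(((j₁ - i₂ : ℕ)) : ℤ) := by omega
    simp only []
    rw [e]
    exact 𝓕.closed.2 _ _ hx _ hy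

/-- The multiplication of the semigroup `B_ω^𝓕`. -/
instance (𝓕 : OmegaFamily) : Mul (BF 𝓕) :=
  ⟨fun x y => ⟨bfMulRaw x.1 y.1, bfMulRaw_mem 𝓕 x.2 y.2⟩⟩

/-- The bicyclic monoid on `ℕ × ℕ`. -/
def Bicyclic : Type := ℕ × ℕ

instance : Mul Bicyclic :=
  ⟨fun a b => ((a.1 + b.1 - min a.2 b.1, a.2 + b.2 - min a.2 b.1) : ℕ × ℕ)⟩

/-!
Every member of `𝓕` lies in `[n₀)`, and on such sets the shift by `-n₀` is injective, commutes
with intersections and with every further shift `d + ·` (no element is lost to truncation at `0`).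
Since the multiplication of `B_ω^𝓕` only intersects and shifts the third coordinates, shifting
them all by `-n₀` is a multiplicative bijection onto `B_ω^{𝓕₀}`, with inverse the shift by `n₀`.
-/

lemma natShift_inter (s : ℤ) (A B : Set ℕ) :
    natShift s (A ∩ B) = natShift s A ∩ natShift s B := by
  ext m
  simp only [natShift, Set.mem_ofPred_eq, Set.mem_inter_iff]
  constructor
  · rintro ⟨k, ⟨hA, hB⟩, hm⟩
    exact ⟨⟨k, hA, hm⟩, ⟨k, hB, hm⟩⟩
  · rintro ⟨⟨k₁, hA, hm₁⟩, ⟨k₂, hB, hm₂⟩⟩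
    obtain rfl : k₁ = k₂ := by omega
    exact ⟨k₁, ⟨hA, hB⟩, hm₁⟩

/-- The hypothesis says that the intermediate shift `b + F` truncates nothing that survives
in `a + b + F`. -/
lemma natShift_natShift {a b : ℤ} {F : Set ℕ} (h : ∀ k ∈ F, 0 ≤ a + b + k → 0 ≤ b + k) :
    natShift a (natShift b F) = natShift (a + b) F := by
  ext m
  simp only [natShift, Set.mem_ofPred_eq]
  constructor
  · rintro ⟨_, ⟨k, hk, hk'⟩, hm⟩
    exact ⟨k, hk, by omega⟩
  · rintro ⟨k, hk, hm⟩
    have := h k hk (by omega)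
    exact ⟨(b + k).toNat, ⟨k, hk, by omega⟩, by omega⟩

lemma natShift_neg_natShift (n : ℕ) (G : Set ℕ) : natShift (-n) (natShift n G) = G := by
  rw [natShift_natShift fun _ _ _ => by omega, neg_add_cancel, natShift_zero]

section LowerBound

variable {n : ℕ} {F : Set ℕ}

lemma natShift_natShift_neg (h : ∀ k ∈ F, n ≤ k) : natShift n (natShift (-n) F) = F := by
  rw [natShift_natShift fun k hk _ => by have := h k hk; omega, add_neg_cancel, natShift_zero]

lemma natShift_neg_natShift_comm (d : ℤ) (h : ∀ k ∈ F, n ≤ k) :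
    natShift (-n) (natShift d F) = natShift d (natShift (-n) F) := by
  rw [natShift_natShift fun _ _ _ => by omega,
    natShift_natShift fun k hk _ => by have := h k hk; omega, add_comm]

end LowerBound

def shiftTriple (s : ℤ) (x : ℕ × ℕ × Set ℕ) : ℕ × ℕ × Set ℕ := (x.1, x.2.1, natShift s x.2.2)

lemma shiftTriple_natCast_neg (n : ℕ) {x : ℕ × ℕ × Set ℕ} (h : ∀ k ∈ x.2.2, n ≤ k) :
    shiftTriple n (shiftTriple (-n) x) = x := by
  simp [shiftTriple, natShift_natShift_neg h]

lemma shiftTriple_neg_natCast (n : ℕ) (x : ℕ × ℕ × Set ℕ) :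
    shiftTriple (-n) (shiftTriple n x) = x := by
  simp [shiftTriple, natShift_neg_natShift]

lemma shiftTriple_bfMulRaw (n : ℕ) {x y : ℕ × ℕ × Set ℕ}
    (hx : ∀ k ∈ x.2.2, n ≤ k) (hy : ∀ k ∈ y.2.2, n ≤ k) :
    shiftTriple (-n) (bfMulRaw x y) = bfMulRaw (shiftTriple (-n) x) (shiftTriple (-n) y) := by
  obtain ⟨i₁, j₁, F₁⟩ := x
  obtain ⟨i₂, j₂, F₂⟩ := y
  simp only [shiftTriple, bfMulRaw]
  split_ifs <;> simp [*, natShift_inter, natShift_neg_natShift_comm _ hx,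
    natShift_neg_natShift_comm _ hy]

def BF.shiftMulEquiv (𝓕 𝓕₀ : OmegaFamily) (n : ℕ) (hn : ∀ F ∈ 𝓕.sets, ∀ k ∈ F, n ≤ k)
    (h₀ : 𝓕₀.sets = natShift (-n) '' 𝓕.sets) : BF 𝓕 ≃* BF 𝓕₀ where
  toFun x := ⟨shiftTriple (-n) x.1, h₀ ▸ ⟨x.1.2.2, x.2, rfl⟩⟩
  invFun y := ⟨shiftTriple n y.1, by
    obtain ⟨F, hF, hFy⟩ : y.1.2.2 ∈ natShift (-n) '' 𝓕.sets := h₀ ▸ y.2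
    simpa [shiftTriple, ← hFy, natShift_natShift_neg (hn F hF)] using hF⟩
  left_inv x := Subtype.ext (shiftTriple_natCast_neg n (hn _ x.2))
  right_inv y := Subtype.ext (shiftTriple_neg_natCast n y.1)
  map_mul' x y := Subtype.ext (shiftTriple_bfMulRaw n (hn _ x.2) (hn _ y.2))

theorem statement1_general (𝓕 𝓕₀ : OmegaFamily)
    (h₀ : 𝓕₀.sets =
      {G : Set ℕ | ∃ F ∈ 𝓕.sets, G = natShift (-((sInf (⋃₀ 𝓕.sets) : ℕ) : ℤ)) F}) :
    ∃ e : BF 𝓕 ≃* BF 𝓕₀, ∀ x : BF 𝓕,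
      (e x).1 = (x.1.1, x.1.2.1, natShift (-((sInf (⋃₀ 𝓕.sets) : ℕ) : ℤ)) x.1.2.2) := by
  have hlower : ∀ F ∈ 𝓕.sets, ∀ k ∈ F, sInf (⋃₀ 𝓕.sets) ≤ k :=
    fun F hF k hk => Nat.sInf_le ⟨F, hF, hk⟩
  have himage : 𝓕₀.sets = natShift (-((sInf (⋃₀ 𝓕.sets) : ℕ) : ℤ)) '' 𝓕.sets := by
    rw [h₀]
    ext G
    simp [eq_comm]
  exact ⟨BF.shiftMulEquiv 𝓕 𝓕₀ _ hlower himage, fun _ => rfl⟩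

theorem statement1 (𝓕 𝓕₀ : OmegaFamily) (hind : InductiveNonempty 𝓕)
    (h₀ : 𝓕₀.sets =
      {G : Set ℕ | ∃ F ∈ 𝓕.sets, G = natShift (-((sInf (⋃₀ 𝓕.sets) : ℕ) : ℤ)) F}) :
    ∃ e : BF 𝓕 ≃* BF 𝓕₀, ∀ x : BF 𝓕,
      (e x).1 = (x.1.1, x.1.2.1, natShift (-((sInf (⋃₀ 𝓕.sets) : ℕ) : ℤ)) x.1.2.2) :=
  statement1_general 𝓕 𝓕₀ h₀
end

section
/- Let 𝓕 be an ω-closed family of nonempty inductive subsets of ℕ. The idempotents of the semigroup B_ω^𝓕 are exactly the elements of the form (i,i,F) with i ∈ ℕ and F ∈ 𝓕, and the natural partial order on this band of idempotents is described as follows: (i,i,[a)) ≼ (j,j,[b)) if and only if j ≤ i and j + b ≤ i + a (where [a),[b) ∈ 𝓕). -/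
/-! The product of diagonal triples `(i, i, A)` and `(j, j, B)` with `j ≤ i` is
`(i, i, A ∩ (j - i + B))` in either order, and `j - i + [b) = [b - (i - j))`; so
`(i, i, [a)) ≼ (j, j, [b))` amounts to `j ≤ i` and `b - (i - j) ≤ a`. -/

lemma BF.ext_iff {𝓕 : OmegaFamily} {x y : BF 𝓕} : x = y ↔ x.1 = y.1 := Subtype.ext_iff

lemma BF.mul_val {𝓕 : OmegaFamily} (x y : BF 𝓕) : (x * y).1 = bfMulRaw x.1 y.1 := rfl

lemma bfMulRaw_self_eq_self_iff (p : ℕ × ℕ × Set ℕ) : bfMulRaw p p = p ↔ p.1 = p.2.1 := by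
  obtain ⟨i, j, F⟩ := p
  simp only [bfMulRaw]
  split_ifs with hlt heq
  · simp only [Prod.mk.injEq]; omega
  · simp [heq]
  · simp only [Prod.mk.injEq]; omega

lemma bfMulRaw_diag_fst (i j : ℕ) (A B : Set ℕ) :
    (bfMulRaw (i, i, A) (j, j, B)).1 = max i j := by
  simp only [bfMulRaw]
  split_ifs <;> omega

lemma bfMulRaw_diag_of_le {i j : ℕ} (h : j ≤ i) (A B : Set ℕ) :
    bfMulRaw (i, i, A) (j, j, B) = (i, i, A ∩ natShift (-((i - j : ℕ) : ℤ)) B) := by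
  have hshift : ((j : ℤ) - i) = -((i - j : ℕ) : ℤ) := by omega
  simp only [bfMulRaw]
  split_ifs with hlt heq
  · omega
  · subst heq; simp [natShift_zero]
  · rw [hshift, Nat.sub_add_cancel h]

lemma bfMulRaw_diag_of_le_swap {i j : ℕ} (h : j ≤ i) (A B : Set ℕ) :
    bfMulRaw (j, j, B) (i, i, A) = (i, i, A ∩ natShift (-((i - j : ℕ) : ℤ)) B) := by
  have hshift : ((j : ℤ) - i) = -((i - j : ℕ) : ℤ) := by omega
  simp only [bfMulRaw]
  split_ifs with hlt heq
  · rw [hshift, Nat.add_sub_cancel' h, Set.inter_comm]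
  · subst heq; simp [natShift_zero, Set.inter_comm]
  · omega

lemma upSet_eq_Ici (k : ℕ) : upSet k = Set.Ici k := rfl

lemma natShift_neg_upSet (n b : ℕ) : natShift (-(n : ℤ)) (upSet b) = upSet (b - n) := by
  ext m
  simp only [natShift, upSet, Set.mem_ofPred_eq]
  constructor
  · rintro ⟨k, hk, hm⟩
    omega
  · intro hm
    exact ⟨m + n, by omega, by push_cast; ring⟩

lemma upSet_inter_upSet_eq_left_iff (a c : ℕ) : upSet a ∩ upSet c = upSet a ↔ c ≤ a := by
  rw [Set.inter_eq_left, upSet_eq_Ici, upSet_eq_Ici, Set.Ici_subset_Ici]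

lemma bfMulRaw_diag_upSet_le_iff (i j a b : ℕ) :
    (bfMulRaw (i, i, upSet a) (j, j, upSet b) = (i, i, upSet a) ∧
      bfMulRaw (j, j, upSet b) (i, i, upSet a) = (i, i, upSet a)) ↔
      j ≤ i ∧ j + b ≤ i + a := by
  by_cases hji : j ≤ i
  · rw [bfMulRaw_diag_of_le hji, bfMulRaw_diag_of_le_swap hji, natShift_neg_upSet]
    simp only [Prod.mk.injEq, true_and, and_self, upSet_inter_upSet_eq_left_iff]
    omega
  · have hfst : (bfMulRaw (i, i, upSet a) (j, j, upSet b)).1 ≠ i := by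
      rw [bfMulRaw_diag_fst]; omega
    simp only [hji, false_and, iff_false, not_and]
    intro h
    exact absurd (congrArg Prod.fst h) hfst

theorem statement3_general (𝓕 : OmegaFamily) :
    (∀ x : BF 𝓕, x * x = x ↔ x.1.1 = x.1.2.1) ∧
    (∀ (i j a b : ℕ), upSet a ∈ 𝓕.sets → upSet b ∈ 𝓕.sets →
      ∀ x y : BF 𝓕, x.1 = (i, i, upSet a) → y.1 = (j, j, upSet b) →
        ((x * y = x ∧ y * x = x) ↔ (j ≤ i ∧ j + b ≤ i + a))) := by
  refine ⟨fun x => BF.ext_iff.trans (bfMulRaw_self_eq_self_iff x.1), ?_⟩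
  intro i j a b _ _ x y hx hy
  rw [BF.ext_iff, BF.ext_iff, BF.mul_val, BF.mul_val, hx, hy]
  exact bfMulRaw_diag_upSet_le_iff i j a b

theorem statement3 (𝓕 : OmegaFamily) (hind : InductiveNonempty 𝓕) :
    (∀ x : BF 𝓕, x * x = x ↔ x.1.1 = x.1.2.1) ∧
    (∀ (i j a b : ℕ), upSet a ∈ 𝓕.sets → upSet b ∈ 𝓕.sets →
      ∀ x y : BF 𝓕, x.1 = (i, i, upSet a) → y.1 = (j, j, upSet b) →
        ((x * y = x ∧ y * x = x) ↔ (j ≤ i ∧ j + b ≤ i + a))) :=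
  statement3_general 𝓕
end

section
/- Let 𝓕 be an ω-closed family of nonempty inductive subsets of ℕ and let S be a subsemigroup of B_ω^𝓕 that is isomorphic to the bicyclic semigroup B_ω. Then there exists a set F ∈ 𝓕 such that S is contained in the subsemigroup B_ω^{{F}} = {(i,j,F) : i,j ∈ ℕ} of B_ω^𝓕. -/
/-!
The `ℕ × ℕ` part of the multiplication of `B_ω^𝓕` is exactly the bicyclic multiplication, and
for an inductive `F` every shift `natShift s F` with `s ≤ 0` contains `F`; hence the triples
`(i, j, F)` with a fixed inductive `F` form a subsemigroup. If `φ` is an isomorphism from the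
bicyclic monoid, then `e = φ (0,0)`, `p = φ (0,1)` and `q = φ (1,0)` satisfy `e² = e`, `pq = e`,
`ep = p` and `qe = q`. Reading off the `ℕ × ℕ` coordinates forces `e = (a, a, F)`,
`p = (a, j, G)`, `q = (j, a, H)` with `G ∩ H = F` and `G, H ⊆ F`, so `G = H = F`. Since
`(0,1)` and `(1,0)` generate the bicyclic monoid, all of `S` lies in `B_ω^{{F}}`.
-/

namespace Bicyclic

def mk (m n : ℕ) : Bicyclic := (m, n)

lemma mk_mul_mk (m n k l : ℕ) : mk m n * mk k l = mk (m + k - min n k) (n + l - min n k) := rfl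

lemma closure_generators_eq_top : Subsemigroup.closure {mk 0 1, mk 1 0} = ⊤ := by
  set C := Subsemigroup.closure ({mk 0 1, mk 1 0} : Set Bicyclic)
  have h01 : mk 0 1 ∈ C := Subsemigroup.subset_closure (by simp)
  have h10 : mk 1 0 ∈ C := Subsemigroup.subset_closure (by simp)
  have hright : ∀ n, mk 0 n ∈ C := by
    intro n
    induction n with
    | zero => exact C.mul_mem h01 h10
    | succ n ih =>
      have : mk 0 n * mk 0 1 = mk 0 (n + 1) := by
        rw [mk_mul_mk]; congr 1 <;> omega
      exact this ▸ C.mul_mem ih h01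
  have hall : ∀ m n, mk m n ∈ C := by
    intro m n
    induction m with
    | zero => exact hright n
    | succ m ih =>
      have : mk 1 0 * mk m n = mk (m + 1) n := by
        rw [mk_mul_mk]; congr 1 <;> omega
      exact this ▸ C.mul_mem h10 ih
  exact eq_top_iff.mpr fun x _ => hall x.1 x.2

end Bicyclic

lemma IsInductiveSet.add_mem {F : Set ℕ} (hF : IsInductiveSet F) {m : ℕ} (hm : m ∈ F) :
    ∀ d : ℕ, m + d ∈ F
  | 0 => hm
  | d + 1 => hF _ (hF.add_mem hm d)

lemma IsInductiveSet.subset_natShift {F : Set ℕ} (hF : IsInductiveSet F) {s : ℤ} (hs : s ≤ 0) :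
    F ⊆ natShift s F := fun m hm =>
  ⟨m + (-s).toNat, hF.add_mem hm _, by push_cast; omega⟩

section bfMulRaw

variable (x y : ℕ × ℕ × Set ℕ)

lemma bfMulRaw_fst : (bfMulRaw x y).1 = x.1 + (y.1 - x.2.1) := by
  unfold bfMulRaw; split_ifs <;> dsimp only <;> omega

lemma bfMulRaw_snd_fst : (bfMulRaw x y).2.1 = x.2.1 - y.1 + y.2.1 := by
  unfold bfMulRaw; split_ifs <;> dsimp only <;> omega

variable {x y}

lemma bfMulRaw_snd_snd_of_eq (h : x.2.1 = y.1) : (bfMulRaw x y).2.2 = x.2.2 ∩ y.2.2 := by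
  unfold bfMulRaw; split_ifs <;> first | rfl | omega

lemma bfMulRaw_snd_snd_of_inductive {F : Set ℕ} (hF : IsInductiveSet F) (hx : x.2.2 = F)
    (hy : y.2.2 = F) : (bfMulRaw x y).2.2 = F := by
  unfold bfMulRaw
  split_ifs with hlt heq <;> simp only [hx, hy]
  · exact Set.inter_eq_right.mpr (hF.subset_natShift (by omega))
  · exact Set.inter_self F
  · exact Set.inter_eq_left.mpr (hF.subset_natShift (by omega))

lemma snd_snd_eq_of_bicyclic_relations {e p q : ℕ × ℕ × Set ℕ} (hee : bfMulRaw e e = e)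
    (hpq : bfMulRaw p q = e) (hep : bfMulRaw e p = p) (hqe : bfMulRaw q e = q) :
    p.2.2 = e.2.2 ∧ q.2.2 = e.2.2 := by
  have coords : ∀ {x y z : ℕ × ℕ × Set ℕ}, bfMulRaw x y = z →
      x.1 + (y.1 - x.2.1) = z.1 ∧ x.2.1 - y.1 + y.2.1 = z.2.1 := fun h =>
    ⟨h ▸ (bfMulRaw_fst _ _).symm, h ▸ (bfMulRaw_snd_fst _ _).symm⟩
  obtain ⟨hee₁, hee₂⟩ := coords hee
  obtain ⟨hpq₁, hpq₂⟩ := coords hpq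
  obtain ⟨hep₁, -⟩ := coords hep
  obtain ⟨-, hqe₂⟩ := coords hqe
  have hpq_eq : p.2.2 ∩ q.2.2 = e.2.2 := hpq ▸ (bfMulRaw_snd_snd_of_eq (by omega)).symm
  have hp : p.2.2 ⊆ e.2.2 := by
    rw [← hep, bfMulRaw_snd_snd_of_eq (by omega)]; exact Set.inter_subset_left
  have hq : q.2.2 ⊆ e.2.2 := by
    rw [← hqe, bfMulRaw_snd_snd_of_eq (by omega)]; exact Set.inter_subset_right
  rw [← hpq_eq] at hp hq ⊢
  exact ⟨hp.antisymm Set.inter_subset_left, hq.antisymm Set.inter_subset_right⟩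

end bfMulRaw

/-- The subsemigroup `B_ω^{{F}}` of `B_ω^𝓕`. -/
def BF.singletonSubsemigroup (𝓕 : OmegaFamily) {F : Set ℕ} (hF : IsInductiveSet F) :
    Subsemigroup (BF 𝓕) where
  carrier := {x | x.1.2.2 = F}
  mul_mem' hx hy := bfMulRaw_snd_snd_of_inductive hF hx hy

theorem statement4 (𝓕 : OmegaFamily) (hind : InductiveNonempty 𝓕)
    (S : Subsemigroup (BF 𝓕)) (hiso : Nonempty (Bicyclic ≃* S)) :
    ∃ F ∈ 𝓕.sets, ∀ x ∈ S, x.1.2.2 = F := by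
  obtain ⟨φ⟩ := hiso
  let f : Bicyclic →ₙ* BF 𝓕 := (MulMemClass.subtype S).comp φ.toMulHom
  have rel : ∀ a b, bfMulRaw (f a).1 (f b).1 = (f (a * b)).1 := fun a b =>
    (congrArg Subtype.val (map_mul f a b)).symm
  obtain ⟨hp, hq⟩ := snd_snd_eq_of_bicyclic_relations
    (rel (Bicyclic.mk 0 0) (Bicyclic.mk 0 0)) (rel (Bicyclic.mk 0 1) (Bicyclic.mk 1 0))
    (rel (Bicyclic.mk 0 0) (Bicyclic.mk 0 1)) (rel (Bicyclic.mk 1 0) (Bicyclic.mk 0 0))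
  set F := (f (Bicyclic.mk 0 0)).1.2.2
  have hFmem : F ∈ 𝓕.sets := (f _).2
  let T := BF.singletonSubsemigroup 𝓕 (hind F hFmem).2
  have hT : ⊤ ≤ T.comap f := by
    rw [← Bicyclic.closure_generators_eq_top, Subsemigroup.closure_le]
    rintro _ (rfl | rfl)
    exacts [hp, hq]
  refine ⟨F, hFmem, fun x hx => ?_⟩
  have hfx : f (φ.symm ⟨x, hx⟩) = x := by simp [f]
  exact hfx ▸ hT (Subsemigroup.mem_top _)
end

section
/- Let 𝓕 be an ω-closed family of nonempty inductive subsets of ℕ and let F ∈ 𝓕. Then the subsemigroup B_ω^{{F}} = {(i,j,F) : i,j ∈ ℕ} is a homomorphic retract of the semigroup B_ω^𝓕; concretely, the map (i,j,G) ↦ (i,j,F) is a homomorphism of B_ω^𝓕 into itself whose image is B_ω^{{F}} and whose set of fixed points is B_ω^{{F}}. -/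
/-!
Collapsing the third coordinate of every element to one fixed `F ∈ 𝓕` is multiplicative
because an inductive `F` is contained in each of its shifts `−n + F`, so every intersection
that occurs in the product of two collapsed elements is again `F`.
-/

lemma IsInductiveSet.add_mem_s8 {F : Set ℕ} (hF : IsInductiveSet F) {i : ℕ} (hi : i ∈ F) (n : ℕ) :
    i + n ∈ F := by
  induction n with
  | zero => exact hi
  | succ n ih => exact hF _ ih

def collapseTo (F : Set ℕ) (x : ℕ × ℕ × Set ℕ) : ℕ × ℕ × Set ℕ := (x.1, x.2.1, F)

lemma bfMulRaw_collapseTo {F : Set ℕ} (hF : IsInductiveSet F) (x y : ℕ × ℕ × Set ℕ) :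
    bfMulRaw (collapseTo F x) (collapseTo F y) = collapseTo F (bfMulRaw x y) := by
  obtain ⟨i₁, j₁, F₁⟩ := x
  obtain ⟨i₂, j₂, F₂⟩ := y
  rcases lt_trichotomy j₁ i₂ with hlt | rfl | hgt
  · simp only [bfMulRaw, collapseTo, if_pos hlt,
      Set.inter_eq_right.2 (hF.subset_natShift (by omega : (j₁ : ℤ) - i₂ ≤ 0))]
  · simp [bfMulRaw, collapseTo]
  · simp only [bfMulRaw, collapseTo, if_neg hgt.not_gt, if_neg hgt.ne',
      Set.inter_eq_left.2 (hF.subset_natShift (by omega : (i₂ : ℤ) - j₁ ≤ 0))]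

namespace BF

variable {𝓕 : OmegaFamily} {F : Set ℕ}

def collapse (hF : F ∈ 𝓕.sets) (hFind : IsInductiveSet F) : BF 𝓕 →ₙ* BF 𝓕 where
  toFun x := ⟨collapseTo F x.1, hF⟩
  map_mul' x y := Subtype.ext (bfMulRaw_collapseTo hFind x.1 y.1).symm

variable (hF : F ∈ 𝓕.sets) (hFind : IsInductiveSet F)

lemma collapse_eq_self_iff (x : BF 𝓕) : collapse hF hFind x = x ↔ x.1.2.2 = F := by
  obtain ⟨⟨i, j, G⟩, hG⟩ := x
  change (⟨(i, j, F), hF⟩ : BF 𝓕) = ⟨(i, j, G), hG⟩ ↔ G = F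
  simp only [Subtype.mk.injEq, Prod.mk.injEq, true_and, eq_comm]

lemma range_collapse : Set.range (collapse hF hFind) = {x : BF 𝓕 | x.1.2.2 = F} := by
  ext x
  refine ⟨?_, fun hx => ⟨x, (collapse_eq_self_iff hF hFind x).2 hx⟩⟩
  rintro ⟨y, rfl⟩
  rfl

end BF

theorem statement8 (𝓕 : OmegaFamily) (hind : InductiveNonempty 𝓕)
    (F : Set ℕ) (hF : F ∈ 𝓕.sets) :
    ∃ h : BF 𝓕 →ₙ* BF 𝓕,
      (∀ x : BF 𝓕, (h x).1 = (x.1.1, x.1.2.1, F)) ∧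
      Set.range h = {x : BF 𝓕 | x.1.2.2 = F} ∧
      {x : BF 𝓕 | h x = x} = {x : BF 𝓕 | x.1.2.2 = F} := by
  have hFind : IsInductiveSet F := (hind F hF).2
  exact ⟨BF.collapse hF hFind, fun _ => rfl, BF.range_collapse hF hFind,
    Set.ext (BF.collapse_eq_self_iff hF hFind)⟩
end

section
/- Let 𝓕 be an ω-closed family of nonempty inductive subsets of ℕ with [k) ∈ 𝓕 for some k ∈ ℕ. Then the map 𝔥_k : B_ω^𝓕 → B_ω^𝓕 defined by 𝔥_k(i,j,[a)) = (i,j,[k)) if a ≤ k and 𝔥_k(i,j,[a)) = (i,j,[a)) if a > k, is a semigroup homomorphism. -/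
/-- The map `𝔥_k` sending `(i, j, [a))` to `(i, j, [k))` when `a ≤ k` and
fixing it otherwise (every nonempty inductive `F` equals `[sInf F)`). -/
noncomputable def retractMap (𝓕 : OmegaFamily) (k : ℕ) (hk : upSet k ∈ 𝓕.sets) : BF 𝓕 → BF 𝓕 :=
  fun z => if sInf z.1.2.2 ≤ k then ⟨(z.1.1, z.1.2.1, upSet k), hk⟩ else z

/-!
Every member of `𝓕` is a ray `[a)`, so an element of `B_ω^𝓕` is a triple `(i, j, a)` of
naturals. In these coordinates the product has a uniform formula: its third coordinate is
`max (a₁ - (i₂ - j₁)) (a₂ - (j₁ - i₂))` with truncated subtraction (at most one of the two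
subtracted numbers is nonzero), and `𝔥_k` replaces `a` by `max a k`. Raising both `a₁, a₂` to
at least `k` raises this maximum to at least `k` and otherwise changes nothing, since
`k - d ≤ k`.
-/

lemma sInf_upSet (a : ℕ) : sInf (upSet a) = a :=
  le_antisymm (Nat.sInf_le (le_refl a)) (Nat.sInf_mem (⟨a, le_refl a⟩ : (upSet a).Nonempty))

lemma IsInductiveSet.eq_upSet_sInf {F : Set ℕ} (hF : IsInductiveSet F) (hne : F.Nonempty) :
    F = upSet (sInf F) := by
  ext m
  refine ⟨fun hm => Nat.sInf_le hm, fun hm => ?_⟩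
  obtain ⟨d, rfl⟩ := Nat.exists_eq_add_of_le hm
  induction d with
  | zero => exact Nat.sInf_mem hne
  | succ d ih => exact hF _ (ih (Nat.le_add_right _ _))

lemma natShift_upSet (s : ℤ) (a : ℕ) : natShift s (upSet a) = upSet (s + a).toNat := by
  ext m
  simp only [natShift, upSet, Set.mem_ofPred_eq]
  constructor
  · rintro ⟨x, hx, hm⟩
    omega
  · intro hm
    exact ⟨((m : ℤ) - s).toNat, by omega, by omega⟩

lemma upSet_inter_upSet (a b : ℕ) : upSet a ∩ upSet b = upSet (max a b) := by
  ext m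
  simp only [upSet, Set.mem_inter_iff, Set.mem_ofPred_eq]
  omega

/-- The triple `(i, j, a)` stands for the element `(i, j, [a))`. -/
def withUpSet (x : ℕ × ℕ × ℕ) : ℕ × ℕ × Set ℕ := (x.1, x.2.1, upSet x.2.2)

def upMul (x y : ℕ × ℕ × ℕ) : ℕ × ℕ × ℕ :=
  (x.1 + (y.1 - x.2.1), x.2.1 - y.1 + y.2.1, max (x.2.2 - (y.1 - x.2.1)) (y.2.2 - (x.2.1 - y.1)))

def raise (k : ℕ) (x : ℕ × ℕ × ℕ) : ℕ × ℕ × ℕ := (x.1, x.2.1, max x.2.2 k)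

lemma bfMulRaw_withUpSet (x y : ℕ × ℕ × ℕ) :
    bfMulRaw (withUpSet x) (withUpSet y) = withUpSet (upMul x y) := by
  obtain ⟨i₁, j₁, a⟩ := x
  obtain ⟨i₂, j₂, b⟩ := y
  simp only [bfMulRaw, withUpSet, upMul, natShift_upSet, upSet_inter_upSet]
  split_ifs <;> congr 3 <;> omega

lemma upMul_raise (k : ℕ) (x y : ℕ × ℕ × ℕ) :
    upMul (raise k x) (raise k y) = raise k (upMul x y) := by
  obtain ⟨i₁, j₁, a⟩ := x
  obtain ⟨i₂, j₂, b⟩ := y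
  simp only [upMul, raise, Prod.mk.injEq, true_and]
  omega

lemma BF.exists_val_eq_withUpSet {𝓕 : OmegaFamily} (hind : InductiveNonempty 𝓕) (z : BF 𝓕) :
    ∃ x, z.1 = withUpSet x := by
  obtain ⟨hne, hF⟩ := hind _ z.2
  exact ⟨(z.1.1, z.1.2.1, sInf z.1.2.2), by rw [withUpSet, ← hF.eq_upSet_sInf hne]⟩

lemma retractMap_val_of_eq_withUpSet {𝓕 : OmegaFamily} {k : ℕ} (hk : upSet k ∈ 𝓕.sets)
    {z : BF 𝓕} {x : ℕ × ℕ × ℕ} (hz : z.1 = withUpSet x) :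
    (retractMap 𝓕 k hk z).1 = withUpSet (raise k x) := by
  have hval : (retractMap 𝓕 k hk z).1 =
      if sInf z.1.2.2 ≤ k then (z.1.1, z.1.2.1, upSet k) else z.1 := by
    by_cases h : sInf z.1.2.2 ≤ k <;> simp [retractMap, h]
  rw [hval, hz, withUpSet, sInf_upSet, withUpSet, raise]
  split_ifs with h
  · rw [max_eq_right h]
  · rw [max_eq_left (le_of_not_ge h)]

theorem statement9 (𝓕 : OmegaFamily) (hind : InductiveNonempty 𝓕)
    (k : ℕ) (hk : upSet k ∈ 𝓕.sets) :
    ∀ x y : BF 𝓕,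
      retractMap 𝓕 k hk (x * y) = retractMap 𝓕 k hk x * retractMap 𝓕 k hk y := by
  intro x y
  obtain ⟨u, hu⟩ := x.exists_val_eq_withUpSet hind
  obtain ⟨v, hv⟩ := y.exists_val_eq_withUpSet hind
  have hxy : (x * y).1 = withUpSet (upMul u v) := by
    rw [BF.mul_val, hu, hv, bfMulRaw_withUpSet]
  apply Subtype.ext
  rw [retractMap_val_of_eq_withUpSet hk hxy, BF.mul_val, retractMap_val_of_eq_withUpSet hk hu,
    retractMap_val_of_eq_withUpSet hk hv, bfMulRaw_withUpSet, upMul_raise]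
end

section
/- Let 𝓕₁ and 𝓕₂ be ω-closed families of nonempty inductive subsets of ℕ, let n₁ = min(⋃𝓕₁) and n₂ = min(⋃𝓕₂), and suppose 𝔥 : B_ω^{𝓕₁} → B_ω^{𝓕₂} is a semigroup isomorphism. Then for every natural number k with [n₁+k) ∈ 𝓕₁ one has [n₂+k) ∈ 𝓕₂ and 𝔥(i,j,[n₁+k)) = (i,j,[n₂+k)) for all i,j ∈ ℕ; i.e., the isomorphism is uniquely determined and given by this formula. -/
/-! Every member of `𝓕` is `[a)` for some `a`, so `B_ω^𝓕` is the set of triples `(i, j, a)`,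
and for the least such `a = n` the element `(0, 0, n)` is the identity. An isomorphism fixes the identity; the
elements with a left (right) inverse are the `(c, 0, n)` (`(0, c, n)`), and comparing `𝔥` with
`𝔥⁻¹` on them shows that `𝔥` fixes `q = (1, 0, n)` and `p = (0, 1, n)`, hence all their powers.
Since `(i, j, a) = qⁱ (0, 0, a) pʲ`, it remains to see that `𝔥` maps the idempotent `(0, 0, n + k)`
to `(0, 0, n + k)`. This goes by induction on `k`, through `p (0, 0, a + 1) q = (0, 0, a)`: the
image `(u, u, b)` of `(0, 0, n + k + 1)` must solve the same equation, and the solutions other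
than `(0, 0, n + k + 1)` are already the images of `(0, 0, n)` or of `(1, 1, n + k)`. -/

theorem MulEquiv.apply_eq_of_left_id_of_right_id {M N : Type*} [Mul M] [Mul N] (e : M ≃* N)
    {u : M} {v : N} (hu : ∀ x, u * x = x) (hv : ∀ y, y * v = y) : e u = v :=
  calc e u = e u * v := (hv _).symm
    _ = v := by simpa using congrArg e (hu (e.symm v))

lemma upSet_injective : Function.Injective upSet := fun a b h =>
  le_antisymm (show b ∈ upSet a from h ▸ le_refl b) (show a ∈ upSet b from h ▸ le_refl a)

lemma bfMulRaw_upSet (i₁ j₁ a i₂ j₂ b : ℕ) :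
    bfMulRaw (i₁, j₁, upSet a) (i₂, j₂, upSet b) =
      (i₁ + (i₂ - j₁), j₂ + (j₁ - i₂), upSet (max (a - (i₂ - j₁)) (b - (j₁ - i₂)))) := by
  unfold bfMulRaw
  dsimp only
  split_ifs <;>
  simp only [natShift_upSet, upSet_inter_upSet, Prod.mk.injEq, upSet_injective.eq_iff, true_and] <;>
  omega

lemma OmegaFamily.eq_upSet_sInf {𝓕 : OmegaFamily} (hIN : InductiveNonempty 𝓕) {F : Set ℕ}
    (hF : F ∈ 𝓕.sets) : F = upSet (sInf F) := by
  obtain ⟨hne, hind⟩ := hIN F hF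
  ext m
  refine ⟨fun hm => Nat.sInf_le hm, fun hm => ?_⟩
  induction m, hm using Nat.le_induction with
  | base => exact Nat.sInf_mem hne
  | succ m _ ih => exact hind m ih

lemma OmegaFamily.isLeast_sInf_sUnion {𝓕 : OmegaFamily} (hIN : InductiveNonempty 𝓕) :
    IsLeast {a | upSet a ∈ 𝓕.sets} (sInf (⋃₀ 𝓕.sets)) := by
  refine ⟨?_, fun a ha => Nat.sInf_le ⟨upSet a, ha, le_refl a⟩⟩
  obtain ⟨F₀, hF₀⟩ := 𝓕.closed.1
  obtain ⟨F, hF, hmin⟩ := Nat.sInf_mem (s := ⋃₀ 𝓕.sets) ⟨_, F₀, hF₀, Nat.sInf_mem (hIN F₀ hF₀).1⟩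
  have hFe := eq_upSet_sInf hIN hF
  have hle : sInf (⋃₀ 𝓕.sets) ≤ sInf F := Nat.sInf_le ⟨F, hF, Nat.sInf_mem ⟨_, hmin⟩⟩
  show upSet _ ∈ 𝓕.sets
  rwa [le_antisymm hle (Nat.sInf_le hmin), ← hFe]

lemma OmegaFamily.upSet_mem_of_le_of_le {𝓕 : OmegaFamily} {n a b : ℕ}
    (hn : upSet n ∈ 𝓕.sets) (ha : upSet a ∈ 𝓕.sets) (hnb : n ≤ b) (hba : b ≤ a) :
    upSet b ∈ 𝓕.sets := by
  have h := 𝓕.closed.2 (a - b) _ hn _ ha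
  rwa [natShift_upSet, upSet_inter_upSet, show max n (-((a - b : ℕ) : ℤ) + a).toNat = b by omega]
    at h

namespace BF

variable {𝓕 : OmegaFamily}

def mk (i j a : ℕ) (h : upSet a ∈ 𝓕.sets) : BF 𝓕 := ⟨(i, j, upSet a), h⟩

lemma mk_eq_mk_iff {i j a i' j' a' : ℕ} {h : upSet a ∈ 𝓕.sets} {h' : upSet a' ∈ 𝓕.sets} :
    mk i j a h = mk i' j' a' h' ↔ i = i' ∧ j = j' ∧ a = a' := by
  refine ⟨fun hm => ?_, fun ⟨hi, hj, ha⟩ => by subst hi hj ha; rfl⟩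
  have hval := congrArg Subtype.val hm
  simp only [mk, Prod.mk.injEq] at hval
  exact ⟨hval.1, hval.2.1, upSet_injective hval.2.2⟩

lemma mk_mul_mk_mem {j₁ a i₂ b : ℕ} (ha : upSet a ∈ 𝓕.sets) (hb : upSet b ∈ 𝓕.sets) :
    upSet (max (a - (i₂ - j₁)) (b - (j₁ - i₂))) ∈ 𝓕.sets := by
  simpa only [bfMulRaw_upSet] using
    bfMulRaw_mem 𝓕 (x := (0, j₁, upSet a)) (y := (i₂, 0, upSet b)) ha hb

lemma mk_mul_mk {i₁ j₁ a i₂ j₂ b : ℕ} (ha : upSet a ∈ 𝓕.sets) (hb : upSet b ∈ 𝓕.sets) :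
    mk i₁ j₁ a ha * mk i₂ j₂ b hb =
      mk (i₁ + (i₂ - j₁)) (j₂ + (j₁ - i₂)) (max (a - (i₂ - j₁)) (b - (j₁ - i₂)))
        (mk_mul_mk_mem ha hb) :=
  Subtype.ext (bfMulRaw_upSet i₁ j₁ a i₂ j₂ b)

lemma mk_mul_mk_eq_mk_iff {i₁ j₁ a i₂ j₂ b i j c : ℕ} {ha : upSet a ∈ 𝓕.sets}
    {hb : upSet b ∈ 𝓕.sets} {hc : upSet c ∈ 𝓕.sets} :
    mk i₁ j₁ a ha * mk i₂ j₂ b hb = mk i j c hc ↔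
      i₁ + (i₂ - j₁) = i ∧ j₂ + (j₁ - i₂) = j ∧ max (a - (i₂ - j₁)) (b - (j₁ - i₂)) = c := by
  rw [mk_mul_mk, mk_eq_mk_iff]

lemma exists_eq_mk (hIN : InductiveNonempty 𝓕) (x : BF 𝓕) :
    ∃ i j a, ∃ ha : upSet a ∈ 𝓕.sets, x = mk i j a ha := by
  obtain ⟨⟨i, j, F⟩, hF⟩ := x
  have hFe : F = upSet (sInf F) := 𝓕.eq_upSet_sInf hIN hF
  exact ⟨i, j, sInf F, hFe ▸ hF,
    Subtype.ext (show (i, j, F) = (i, j, upSet (sInf F)) by rw [← hFe])⟩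

lemma exists_eq_mk_of_isIdempotentElem (hIN : InductiveNonempty 𝓕) {x : BF 𝓕}
    (hx : IsIdempotentElem x) : ∃ u b, ∃ hb : upSet b ∈ 𝓕.sets, x = mk u u b hb := by
  obtain ⟨i, j, a, ha, rfl⟩ := exists_eq_mk hIN x
  have := mk_mul_mk_eq_mk_iff.1 hx
  exact ⟨i, a, ha, mk_eq_mk_iff.2 ⟨rfl, by omega, rfl⟩⟩

lemma mk_zero_one_mul_mk_one_zero {n : ℕ} (hn : upSet n ∈ 𝓕.sets) :
    mk 0 1 n hn * mk 1 0 n hn = mk 0 0 n hn :=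
  mk_mul_mk_eq_mk_iff.2 (by omega)

lemma isIdempotentElem_mk_zero_zero {a : ℕ} (ha : upSet a ∈ 𝓕.sets) :
    IsIdempotentElem (mk 0 0 a ha) :=
  mk_mul_mk_eq_mk_iff.2 (by omega)

lemma mk_mul_mk_mul_mk {n a : ℕ} (hn : upSet n ∈ 𝓕.sets) (ha : upSet a ∈ 𝓕.sets) (hna : n ≤ a)
    (i j : ℕ) : mk i 0 n hn * mk 0 0 a ha * mk 0 j n hn = mk i j a ha := by
  rw [mk_mul_mk, mk_mul_mk_eq_mk_iff]
  omega

lemma mk_zero_one_mul_mk_mul_mk_one_zero {n a : ℕ} (hn : upSet n ∈ 𝓕.sets)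
    (ha : upSet a ∈ 𝓕.sets) (ha' : upSet (a + 1) ∈ 𝓕.sets) (hna : n ≤ a) :
    mk 0 1 n hn * mk 0 0 (a + 1) ha' * mk 1 0 n hn = mk 0 0 a ha := by
  rw [mk_mul_mk, mk_mul_mk_eq_mk_iff]
  omega

section Identity

variable (hIN : InductiveNonempty 𝓕) {n : ℕ} (hn : IsLeast {a | upSet a ∈ 𝓕.sets} n)
include hIN hn

lemma mk_zero_zero_mul (x : BF 𝓕) : mk 0 0 n hn.1 * x = x := by
  obtain ⟨i, j, a, ha, rfl⟩ := exists_eq_mk hIN x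
  have := hn.2 ha
  exact mk_mul_mk_eq_mk_iff.2 (by omega)

lemma mul_mk_zero_zero (x : BF 𝓕) : x * mk 0 0 n hn.1 = x := by
  obtain ⟨i, j, a, ha, rfl⟩ := exists_eq_mk hIN x
  have := hn.2 ha
  exact mk_mul_mk_eq_mk_iff.2 (by omega)

lemma exists_eq_mk_of_mul_left_eq_mk_zero_zero {x y : BF 𝓕} (h : y * x = mk 0 0 n hn.1) :
    ∃ c, x = mk c 0 n hn.1 := by
  obtain ⟨i, j, a, ha, rfl⟩ := exists_eq_mk hIN x
  obtain ⟨i', j', b, hb, rfl⟩ := exists_eq_mk hIN y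
  have := hn.2 ha
  have := mk_mul_mk_eq_mk_iff.1 h
  exact ⟨i, mk_eq_mk_iff.2 (by omega)⟩

lemma exists_eq_mk_of_mul_right_eq_mk_zero_zero {x y : BF 𝓕} (h : x * y = mk 0 0 n hn.1) :
    ∃ c, x = mk 0 c n hn.1 := by
  obtain ⟨i, j, a, ha, rfl⟩ := exists_eq_mk hIN x
  obtain ⟨i', j', b, hb, rfl⟩ := exists_eq_mk hIN y
  have := hn.2 ha
  have := mk_mul_mk_eq_mk_iff.1 h
  exact ⟨j, mk_eq_mk_iff.2 (by omega)⟩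

end Identity

section Isomorphism

variable {𝓕₁ 𝓕₂ : OmegaFamily} (hIN₁ : InductiveNonempty 𝓕₁) (hIN₂ : InductiveNonempty 𝓕₂)
  {n₁ n₂ : ℕ} (hn₁ : IsLeast {a | upSet a ∈ 𝓕₁.sets} n₁) (hn₂ : IsLeast {a | upSet a ∈ 𝓕₂.sets} n₂)
  (e : BF 𝓕₁ ≃* BF 𝓕₂)
include hIN₁ hIN₂ hn₁ hn₂

lemma map_mk_zero_zero_least : e (mk 0 0 n₁ hn₁.1) = mk 0 0 n₂ hn₂.1 :=
  e.apply_eq_of_left_id_of_right_id (mk_zero_zero_mul hIN₁ hn₁) (mul_mk_zero_zero hIN₂ hn₂)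

lemma map_mk_zero_one_mul_map_mk_one_zero :
    e (mk 0 1 n₁ hn₁.1) * e (mk 1 0 n₁ hn₁.1) = mk 0 0 n₂ hn₂.1 := by
  rw [← map_mul, mk_zero_one_mul_mk_one_zero, map_mk_zero_zero_least hIN₁ hIN₂ hn₁ hn₂]

lemma exists_map_mk_left : ∃ c, ∀ m, e (mk m 0 n₁ hn₁.1) = mk (m * c) 0 n₂ hn₂.1 := by
  obtain ⟨c, hc⟩ := exists_eq_mk_of_mul_left_eq_mk_zero_zero hIN₂ hn₂
    (map_mk_zero_one_mul_map_mk_one_zero hIN₁ hIN₂ hn₁ hn₂ e)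
  refine ⟨c, fun m => ?_⟩
  induction m with
  | zero => simpa only [zero_mul] using map_mk_zero_zero_least hIN₁ hIN₂ hn₁ hn₂ e
  | succ m ih =>
    have hsplit : mk m 0 n₁ hn₁.1 * mk 1 0 n₁ hn₁.1 = mk (m + 1) 0 n₁ hn₁.1 :=
      mk_mul_mk_eq_mk_iff.2 (by omega)
    rw [← hsplit, map_mul, ih, hc, mk_mul_mk_eq_mk_iff, add_one_mul]
    omega

lemma map_mk_left (m : ℕ) : e (mk m 0 n₁ hn₁.1) = mk m 0 n₂ hn₂.1 := by
  obtain ⟨c, hc⟩ := exists_map_mk_left hIN₁ hIN₂ hn₁ hn₂ e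
  obtain ⟨c', hc'⟩ := exists_map_mk_left hIN₂ hIN₁ hn₂ hn₁ e.symm
  have h : mk 1 0 n₂ hn₂.1 = mk (1 * c' * c) 0 n₂ hn₂.1 := by
    rw [← hc, ← hc', e.apply_symm_apply]
  have hc'c : 1 = 1 * c' * c := (mk_eq_mk_iff.1 h).1
  have hc1 : c = 1 :=
    Nat.eq_one_of_mul_eq_one_left (m := c') (by simpa only [one_mul] using hc'c.symm)
  rw [hc, hc1, mul_one]

lemma map_mk_right (m : ℕ) : e (mk 0 m n₁ hn₁.1) = mk 0 m n₂ hn₂.1 := by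
  have hpq := map_mk_zero_one_mul_map_mk_one_zero hIN₁ hIN₂ hn₁ hn₂ e
  obtain ⟨d, hd⟩ := exists_eq_mk_of_mul_right_eq_mk_zero_zero hIN₂ hn₂ hpq
  have hd1 : d = 1 := by
    rw [hd, map_mk_left hIN₁ hIN₂ hn₁ hn₂, mk_mul_mk_eq_mk_iff] at hpq
    omega
  induction m with
  | zero => exact map_mk_zero_zero_least hIN₁ hIN₂ hn₁ hn₂ e
  | succ m ih =>
    have hsplit : mk 0 m n₁ hn₁.1 * mk 0 1 n₁ hn₁.1 = mk 0 (m + 1) n₁ hn₁.1 :=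
      mk_mul_mk_eq_mk_iff.2 (by omega)
    rw [← hsplit, map_mul, ih, hd, hd1]
    exact mk_mul_mk_eq_mk_iff.2 (by omega)

lemma map_mk_of_map_mk_zero_zero {a₁ a₂ : ℕ} {ha₁ : upSet a₁ ∈ 𝓕₁.sets}
    {ha₂ : upSet a₂ ∈ 𝓕₂.sets} (h : e (mk 0 0 a₁ ha₁) = mk 0 0 a₂ ha₂) (i j : ℕ) :
    e (mk i j a₁ ha₁) = mk i j a₂ ha₂ := by
  rw [← mk_mul_mk_mul_mk hn₁.1 ha₁ (hn₁.2 ha₁), map_mul, map_mul, map_mk_left hIN₁ hIN₂ hn₁ hn₂,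
    h, map_mk_right hIN₁ hIN₂ hn₁ hn₂, mk_mul_mk_mul_mk hn₂.1 ha₂ (hn₂.2 ha₂)]

lemma map_mk_zero_zero_add (k : ℕ) (hk : upSet (n₁ + k) ∈ 𝓕₁.sets) :
    ∃ hk₂ : upSet (n₂ + k) ∈ 𝓕₂.sets, e (mk 0 0 (n₁ + k) hk) = mk 0 0 (n₂ + k) hk₂ := by
  induction k with
  | zero => exact ⟨hn₂.1, map_mk_zero_zero_least hIN₁ hIN₂ hn₁ hn₂ e⟩
  | succ k ih =>
    have hk' : upSet (n₁ + k) ∈ 𝓕₁.sets := 𝓕₁.upSet_mem_of_le_of_le hn₁.1 hk (by omega) (by omega)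
    obtain ⟨hk₂, ih⟩ := ih hk'
    obtain ⟨u, b, hb, hx⟩ := exists_eq_mk_of_isIdempotentElem hIN₂
      ((isIdempotentElem_mk_zero_zero hk).map e)
    have hconj :
        mk 0 1 n₁ hn₁.1 * mk 0 0 (n₁ + (k + 1)) hk * mk 1 0 n₁ hn₁.1 = mk 0 0 (n₁ + k) hk' :=
      mk_zero_one_mul_mk_mul_mk_one_zero hn₁.1 hk' hk (hn₁.2 hk')
    replace hconj := congrArg e hconj
    rw [map_mul, map_mul, map_mk_right hIN₁ hIN₂ hn₁ hn₂, map_mk_left hIN₁ hIN₂ hn₁ hn₂, hx, ih,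
      mk_mul_mk, mk_mul_mk_eq_mk_iff] at hconj
    have hcases : (u = 0 ∧ b = n₂ + (k + 1)) ∨ (u = 0 ∧ k = 0 ∧ b = n₂) ∨ (u = 1 ∧ b = n₂ + k) := by
      have := hn₂.2 hb
      omega
    rcases hcases with ⟨rfl, rfl⟩ | ⟨rfl, rfl, rfl⟩ | ⟨rfl, rfl⟩
    · exact ⟨hb, hx⟩
    · have := mk_eq_mk_iff.1
        (e.injective (hx.trans (map_mk_zero_zero_least hIN₁ hIN₂ hn₁ hn₂ e).symm))
      omega
    · have := mk_eq_mk_iff.1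
        (e.injective (hx.trans (map_mk_of_map_mk_zero_zero hIN₁ hIN₂ hn₁ hn₂ e ih 1 1).symm))
      omega

end Isomorphism

end BF

theorem statement16 (𝓕₁ 𝓕₂ : OmegaFamily)
    (h1 : InductiveNonempty 𝓕₁) (h2 : InductiveNonempty 𝓕₂)
    (e : BF 𝓕₁ ≃* BF 𝓕₂) :
    ∀ k : ℕ, upSet (sInf (⋃₀ 𝓕₁.sets) + k) ∈ 𝓕₁.sets →
      upSet (sInf (⋃₀ 𝓕₂.sets) + k) ∈ 𝓕₂.sets ∧
      ∀ (i j : ℕ) (h : upSet (sInf (⋃₀ 𝓕₁.sets) + k) ∈ 𝓕₁.sets),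
        (e ⟨(i, j, upSet (sInf (⋃₀ 𝓕₁.sets) + k)), h⟩).1 =
          (i, j, upSet (sInf (⋃₀ 𝓕₂.sets) + k)) := by
  intro k hk
  have hn₁ := 𝓕₁.isLeast_sInf_sUnion h1
  have hn₂ := 𝓕₂.isLeast_sInf_sUnion h2
  obtain ⟨hk₂, he⟩ := BF.map_mk_zero_zero_add h1 h2 hn₁ hn₂ e k hk
  exact ⟨hk₂, fun i j _ =>
    congrArg Subtype.val (BF.map_mk_of_map_mk_zero_zero h1 h2 hn₁ hn₂ e he i j)⟩
end

section
/- Let 𝓕 be an ω-closed family of nonempty inductive subsets of ℕ. Then every automorphism of the semigroup B_ω^𝓕 is the identity map; in particular, the automorphism group of B_ω^𝓕 is trivial. -/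
/-!
Every set of `𝓕` is an up-set `[k)`, so the elements of `B_ω^𝓕` are triples `(i, j, [k))`.
For the least admissible level `k₀`, `1 = (0, 0, [k₀))` is an identity, and `t = (0, 1, [k₀))`,
`s = (1, 0, [k₀))` generate a bicyclic submonoid with `t s = 1`. An automorphism fixes `1`,
so it permutes the right invertible elements `tⁿ = (0, n, [k₀))`; if `t ↦ tᵇ` then `tⁿ ↦ tⁿᵇ`,
and surjectivity forces `b = 1`, so `t`, then `s`, are fixed. As `x s t = x` exactly when
`j ≥ 1` and `s (t x) = x` exactly when `i ≥ 1`, the automorphism preserves the idempotents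
`(0, 0, [k))`; conjugation `x ↦ t x s` lowers their level by one, which fixes them by induction
on `k`. Finally `(i, j, [k))` is `sⁱ (0, 0, [k)) tʲ`.
-/

open Set

lemma IsInductiveSet.eq_Ici_sInf {F : Set ℕ} (hF : IsInductiveSet F) (hne : F.Nonempty) :
    F = Ici (sInf F) := by
  ext m
  refine ⟨fun hm => Nat.sInf_le hm, fun hm => ?_⟩
  induction m, hm using Nat.le_induction with
  | base => exact Nat.sInf_mem hne
  | succ m _ ih => exact hF m ih

lemma natShift_Ici (s : ℤ) (a : ℕ) : natShift s (Ici a) = Ici (s + a).toNat := by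
  ext m
  simp only [natShift, mem_Ici, mem_ofPred_eq]
  constructor
  · rintro ⟨k, hk, hm⟩
    omega
  · intro hm
    exact ⟨(m - s).toNat, by omega, by omega⟩

lemma MulEquiv.map_eq_self_of_isIdentity {M : Type*} [Mul M] (e : M ≃* M) {u : M}
    (hleft : ∀ x, u * x = x) (hright : ∀ x, x * u = x) : e u = u :=
  calc e u = e u * e (e.symm u) := by rw [e.apply_symm_apply, hright]
    _ = u := by rw [← map_mul, hleft, e.apply_symm_apply]

namespace BF

variable {𝓕 : OmegaFamily}

def row (x : BF 𝓕) : ℕ := x.1.1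

def col (x : BF 𝓕) : ℕ := x.1.2.1

noncomputable def level (x : BF 𝓕) : ℕ := sInf x.1.2.2

lemma row_mul (x y : BF 𝓕) : (x * y).row = x.row + (y.row - x.col) := by
  show (bfMulRaw x.1 y.1).1 = _
  unfold bfMulRaw row col
  split_ifs <;> omega

lemma col_mul (x y : BF 𝓕) : (x * y).col = y.col + (x.col - y.row) := by
  show (bfMulRaw x.1 y.1).2.1 = _
  unfold bfMulRaw row col
  split_ifs <;> dsimp only <;> omega

lemma set_eq_Ici_level (hind : InductiveNonempty 𝓕) (x : BF 𝓕) : x.1.2.2 = Ici x.level :=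
  (hind _ x.2).2.eq_Ici_sInf (hind _ x.2).1

lemma level_mul (hind : InductiveNonempty 𝓕) (x y : BF 𝓕) :
    (x * y).level = max (x.level - (y.row - x.col)) (y.level - (x.col - y.row)) := by
  show sInf (bfMulRaw x.1 y.1).2.2 = _
  have hx := set_eq_Ici_level hind x
  have hy := set_eq_Ici_level hind y
  unfold bfMulRaw row col
  split_ifs <;>
    simp only [hx, hy, natShift_Ici, Ici_inter_Ici, csInf_Ici] <;> omega

lemma ext (hind : InductiveNonempty 𝓕) {x y : BF 𝓕} (hrow : x.row = y.row)
    (hcol : x.col = y.col) (hlevel : x.level = y.level) : x = y := by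
  apply Subtype.ext
  rw [Prod.ext_iff, Prod.ext_iff, set_eq_Ici_level hind, set_eq_Ici_level hind, hlevel]
  exact ⟨hrow, hcol, rfl⟩

noncomputable def minLevel (𝓕 : OmegaFamily) : ℕ := sInf {k | Ici k ∈ 𝓕.sets}

lemma Ici_minLevel_mem (hind : InductiveNonempty 𝓕) : Ici (minLevel 𝓕) ∈ 𝓕.sets := by
  obtain ⟨F, hF⟩ := 𝓕.closed.1
  refine Nat.sInf_mem (s := {k | Ici k ∈ 𝓕.sets}) ⟨sInf F, ?_⟩
  rwa [mem_ofPred_eq, ← (hind F hF).2.eq_Ici_sInf (hind F hF).1]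

lemma minLevel_le_level (hind : InductiveNonempty 𝓕) (x : BF 𝓕) : minLevel 𝓕 ≤ x.level :=
  Nat.sInf_le (by rw [mem_ofPred_eq, ← set_eq_Ici_level hind]; exact x.2)

/-- `(i, j, [k₀))` for the least level `k₀`: `1 = bicyclicElem hind 0 0`,
`t = bicyclicElem hind 0 1` and `s = bicyclicElem hind 1 0`. -/
def bicyclicElem (hind : InductiveNonempty 𝓕) (i j : ℕ) : BF 𝓕 :=
  ⟨(i, j, Ici (minLevel 𝓕)), Ici_minLevel_mem hind⟩

section bicyclicElem

variable (hind : InductiveNonempty 𝓕)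

@[simp] lemma row_bicyclicElem (i j : ℕ) : (bicyclicElem hind i j).row = i := rfl

@[simp] lemma col_bicyclicElem (i j : ℕ) : (bicyclicElem hind i j).col = j := rfl

@[simp] lemma level_bicyclicElem (i j : ℕ) : (bicyclicElem hind i j).level = minLevel 𝓕 :=
  csInf_Ici

lemma bicyclicElem_mul_bicyclicElem (i j i' j' : ℕ) :
    bicyclicElem hind i j * bicyclicElem hind i' j' =
      bicyclicElem hind (i + (i' - j)) (j' + (j - i')) := by
  apply ext hind <;>
    simp only [row_mul, col_mul, level_mul hind, row_bicyclicElem, col_bicyclicElem,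
      level_bicyclicElem]
  omega

lemma bicyclicElem_zero_zero_mul (x : BF 𝓕) : bicyclicElem hind 0 0 * x = x := by
  have := minLevel_le_level hind x
  apply ext hind <;>
    simp only [row_mul, col_mul, level_mul hind, row_bicyclicElem, col_bicyclicElem,
      level_bicyclicElem] <;>
    omega

lemma mul_bicyclicElem_zero_zero (x : BF 𝓕) : x * bicyclicElem hind 0 0 = x := by
  have := minLevel_le_level hind x
  apply ext hind <;>
    simp only [row_mul, col_mul, level_mul hind, row_bicyclicElem, col_bicyclicElem,
      level_bicyclicElem] <;>
    omega

lemma eq_bicyclicElem_of_mul_eq_one {x y : BF 𝓕} (h : x * y = bicyclicElem hind 0 0) :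
    x = bicyclicElem hind 0 x.col ∧ y = bicyclicElem hind x.col 0 := by
  have hrow := congrArg row h
  have hcol := congrArg col h
  have hlevel := congrArg level h
  simp only [row_mul, col_mul, level_mul hind, row_bicyclicElem, col_bicyclicElem,
    level_bicyclicElem] at hrow hcol hlevel
  have := minLevel_le_level hind x
  have := minLevel_le_level hind y
  constructor <;> apply ext hind <;>
    simp only [row_bicyclicElem, col_bicyclicElem, level_bicyclicElem] <;> omega

lemma mul_bicyclicElem_mul_eq_self_iff (x : BF 𝓕) :
    x * bicyclicElem hind 1 0 * bicyclicElem hind 0 1 = x ↔ 1 ≤ x.col := by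
  have := minLevel_le_level hind x
  constructor
  · intro h
    have := congrArg col h
    simp only [col_mul, row_bicyclicElem, col_bicyclicElem] at this
    omega
  · intro h
    apply ext hind <;>
      simp only [row_mul, col_mul, level_mul hind, row_bicyclicElem, col_bicyclicElem,
        level_bicyclicElem] <;>
      omega

lemma bicyclicElem_mul_mul_eq_self_iff (x : BF 𝓕) :
    bicyclicElem hind 1 0 * (bicyclicElem hind 0 1 * x) = x ↔ 1 ≤ x.row := by
  have := minLevel_le_level hind x
  constructor
  · intro h
    have := congrArg row h
    simp only [row_mul, row_bicyclicElem, col_bicyclicElem] at this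
    omega
  · intro h
    apply ext hind <;>
      simp only [row_mul, col_mul, level_mul hind, row_bicyclicElem, col_bicyclicElem,
        level_bicyclicElem] <;>
      omega

lemma row_col_level_bicyclicElem_mul_mul (x : BF 𝓕) (hrow : x.row = 0) (hcol : x.col = 0) :
    (bicyclicElem hind 0 1 * x * bicyclicElem hind 1 0).row = 0 ∧
      (bicyclicElem hind 0 1 * x * bicyclicElem hind 1 0).col = 0 ∧
      (bicyclicElem hind 0 1 * x * bicyclicElem hind 1 0).level =
        max (minLevel 𝓕) (x.level - 1) := by
  simp only [row_mul, col_mul, level_mul hind, row_bicyclicElem, col_bicyclicElem,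
    level_bicyclicElem, hrow, hcol, true_and]
  omega

lemma map_bicyclicElem_zero_zero (e : BF 𝓕 ≃* BF 𝓕) :
    e (bicyclicElem hind 0 0) = bicyclicElem hind 0 0 :=
  e.map_eq_self_of_isIdentity (bicyclicElem_zero_zero_mul hind) (mul_bicyclicElem_zero_zero hind)

lemma map_bicyclicElem_zero (e : BF 𝓕 ≃* BF 𝓕) (n : ℕ) :
    e (bicyclicElem hind 0 n) = bicyclicElem hind 0 (n * (e (bicyclicElem hind 0 1)).col) := by
  have ht : e (bicyclicElem hind 0 1) = bicyclicElem hind 0 (e (bicyclicElem hind 0 1)).col := by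
    refine (eq_bicyclicElem_of_mul_eq_one hind (y := e (bicyclicElem hind 1 0)) ?_).1
    rw [← map_mul, bicyclicElem_mul_bicyclicElem, map_bicyclicElem_zero_zero]
  induction n with
  | zero => simpa using map_bicyclicElem_zero_zero hind e
  | succ n ih =>
    have hsplit :
        bicyclicElem hind 0 (n + 1) = bicyclicElem hind 0 n * bicyclicElem hind 0 1 := by
      rw [bicyclicElem_mul_bicyclicElem]; congr 1 <;> omega
    rw [hsplit, map_mul, ih, ht, bicyclicElem_mul_bicyclicElem]
    congr 1 <;> simp [add_one_mul, add_comm]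

lemma map_bicyclicElem_zero_one (e : BF 𝓕 ≃* BF 𝓕) :
    e (bicyclicElem hind 0 1) = bicyclicElem hind 0 1 := by
  have hcol := congrArg col (congrArg e (map_bicyclicElem_zero hind e.symm 1))
  rw [e.apply_symm_apply, map_bicyclicElem_zero, col_bicyclicElem, col_bicyclicElem, one_mul,
    eq_comm] at hcol
  rw [map_bicyclicElem_zero, one_mul, Nat.eq_one_of_mul_eq_one_left hcol]

lemma map_bicyclicElem_one_zero (e : BF 𝓕 ≃* BF 𝓕) :
    e (bicyclicElem hind 1 0) = bicyclicElem hind 1 0 := by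
  have h : bicyclicElem hind 0 1 * e (bicyclicElem hind 1 0) = bicyclicElem hind 0 0 := by
    rw [← map_bicyclicElem_zero_one hind e, ← map_mul, bicyclicElem_mul_bicyclicElem,
      map_bicyclicElem_zero_zero]
  exact (eq_bicyclicElem_of_mul_eq_one hind h).2

end bicyclicElem

lemma one_le_col_map_iff (hind : InductiveNonempty 𝓕) (e : BF 𝓕 ≃* BF 𝓕) (x : BF 𝓕) :
    1 ≤ (e x).col ↔ 1 ≤ x.col := by
  rw [← mul_bicyclicElem_mul_eq_self_iff hind, ← mul_bicyclicElem_mul_eq_self_iff hind x]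
  conv_lhs => rw [← map_bicyclicElem_zero_one hind e, ← map_bicyclicElem_one_zero hind e,
    ← map_mul, ← map_mul, e.injective.eq_iff]

lemma one_le_row_map_iff (hind : InductiveNonempty 𝓕) (e : BF 𝓕 ≃* BF 𝓕) (x : BF 𝓕) :
    1 ≤ (e x).row ↔ 1 ≤ x.row := by
  rw [← bicyclicElem_mul_mul_eq_self_iff hind, ← bicyclicElem_mul_mul_eq_self_iff hind x]
  conv_lhs => rw [← map_bicyclicElem_zero_one hind e, ← map_bicyclicElem_one_zero hind e,
    ← map_mul, ← map_mul, e.injective.eq_iff]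

lemma map_eq_self_of_row_eq_zero_of_col_eq_zero (hind : InductiveNonempty 𝓕)
    (e : BF 𝓕 ≃* BF 𝓕) (x : BF 𝓕) (hrow : x.row = 0) (hcol : x.col = 0) : e x = x := by
  obtain ⟨n, hn⟩ := Nat.exists_eq_add_of_le (minLevel_le_level hind x)
  induction n generalizing x with
  | zero =>
    have hx : x = bicyclicElem hind 0 0 := ext hind hrow hcol (by simpa using hn)
    rw [hx, map_bicyclicElem_zero_zero]
  | succ n ih =>
    have hrow' : (e x).row = 0 := by
      have := one_le_row_map_iff hind e x
      omega
    have hcol' : (e x).col = 0 := by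
      have := one_le_col_map_iff hind e x
      omega
    obtain ⟨hrowx, hcolx, hlevelx⟩ := row_col_level_bicyclicElem_mul_mul hind x hrow hcol
    obtain ⟨-, -, hlevelex⟩ := row_col_level_bicyclicElem_mul_mul hind (e x) hrow' hcol'
    have hfix := ih _ hrowx hcolx (by omega)
    rw [map_mul, map_mul, map_bicyclicElem_zero_one, map_bicyclicElem_one_zero] at hfix
    have hne : (e x).level ≠ minLevel 𝓕 := by
      intro h
      have hex : e x = e (bicyclicElem hind 0 0) := by
        rw [map_bicyclicElem_zero_zero]; exact ext hind hrow' hcol' (by simpa using h)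
      have := congrArg level (e.injective hex)
      simp only [level_bicyclicElem] at this
      omega
    have := minLevel_le_level hind (e x)
    rw [hfix] at hlevelex
    exact ext hind (hrow'.trans hrow.symm) (hcol'.trans hcol.symm) (by omega)

end BF

theorem statement17 (𝓕 : OmegaFamily) (hind : InductiveNonempty 𝓕)
    (e : BF 𝓕 ≃* BF 𝓕) :
    ∀ x : BF 𝓕, e x = x := by
  intro x
  obtain ⟨n, hn⟩ : ∃ n, x.row + x.col = n := ⟨_, rfl⟩
  induction n generalizing x with
  | zero => exact BF.map_eq_self_of_row_eq_zero_of_col_eq_zero hind e x (by omega) (by omega)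
  | succ n ih =>
    by_cases hrow : 1 ≤ x.row
    · rw [← (BF.bicyclicElem_mul_mul_eq_self_iff hind x).2 hrow, map_mul,
        BF.map_bicyclicElem_one_zero, ih]
      simp only [BF.row_mul, BF.col_mul, BF.row_bicyclicElem, BF.col_bicyclicElem]
      omega
    · rw [← (BF.mul_bicyclicElem_mul_eq_self_iff hind x).2 (by omega), map_mul,
        BF.map_bicyclicElem_zero_one, ih]
      simp only [BF.row_mul, BF.col_mul, BF.row_bicyclicElem, BF.col_bicyclicElem]
      omega
end
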